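/- arXiv:2602.19893 — 3 statements merged into one kernel-verified Lean document; each statement's English description precedes it below -/
import Mathlib

section
/- For every integer k ≥ 1, the first-order coefficient of the equal-truncation generalized Hessian operator vanishes: 2 ∑_{m=1}^k (-1)^{2-m} (∑_{j=1}^k 1/j) C(k,m) + ∑_{l=1}^k ∑_{m=1}^k (-1)^{2-l-m} C(k,l) C(k,m) (l+m)/(l·m) = 0. -/
/-!
Write `a m = (-1)^m * C(k,m)`, `A = ∑ a m` and `B = ∑ a m / m`. Since `(l+m)/(lm) = 1/l + 1/m`,
the expression equals `2 A (H_k + B)`, and `B = -H_k` is the classical alternating binomial sum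
for the harmonic numbers.
-/

open Finset

lemma sum_Icc_one_neg_one_pow_mul_choose {n : ℕ} (hn : n ≠ 0) :
    ∑ m ∈ Icc 1 n, (-1 : ℚ) ^ m * n.choose m = -1 := by
  have h := congrArg (Int.cast : ℤ → ℚ) (Int.alternating_sum_range_choose_of_ne hn)
  push_cast at h
  rw [range_eq_Ico, sum_eq_sum_Ico_succ_bot (by omega), Ico_add_one_right_eq_Icc] at h
  simpa [add_eq_zero_iff_eq_neg'] using h

lemma choose_succ_succ_div_eq (n m : ℕ) :
    ((n + 1).choose (m + 1) : ℚ) / (m + 1 : ℕ)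
      = (n.choose (m + 1) : ℚ) / (m + 1 : ℕ) + ((n + 1).choose (m + 1) : ℚ) / (n + 1 : ℕ) := by
  have absorb := congrArg (Nat.cast : ℕ → ℚ) (Nat.add_one_mul_choose_eq n m)
  have pascal := congrArg (Nat.cast : ℕ → ℚ) (Nat.choose_succ_succ' n m)
  push_cast at absorb pascal ⊢
  field_simp
  linear_combination absorb + (n + 1 : ℚ) * pascal

theorem sum_Icc_one_neg_one_pow_mul_choose_div (n : ℕ) :
    ∑ m ∈ Icc 1 n, (-1 : ℚ) ^ m * n.choose m / m = -harmonic n := by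
  induction n with
  | zero => simp
  | succ n ih =>
    have split : ∀ m ∈ Icc 1 (n + 1), (-1 : ℚ) ^ m * (n + 1).choose m / m
        = (-1 : ℚ) ^ m * n.choose m / m + (-1 : ℚ) ^ m * (n + 1).choose m / (n + 1 : ℕ) := by
      intro m hm
      obtain ⟨p, rfl⟩ := Nat.exists_eq_add_of_le' (mem_Icc.mp hm).1
      rw [mul_div_assoc, mul_div_assoc, mul_div_assoc, choose_succ_succ_div_eq, mul_add]
    rw [sum_congr rfl split, sum_add_distrib, sum_Icc_succ_top (by omega), ← sum_div,
      sum_Icc_one_neg_one_pow_mul_choose n.succ_ne_zero, ih, harmonic_succ]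
    simp only [Nat.choose_succ_self, CharP.cast_eq_zero, mul_zero, zero_div, add_zero, Nat.cast_add,
      Nat.cast_one]
    ring

lemma neg_one_zpow_two_sub {K : Type*} [DivisionRing K] (n : ℕ) :
    (-1 : K) ^ ((2 : ℤ) - n) = (-1) ^ n := by
  rw [show (2 : ℤ) - n = n + 2 * (1 - n) by ring, zpow_add₀ (by norm_num), zpow_mul, zpow_natCast]
  norm_num

theorem stmt4_general (k : ℕ) :
    2 * ∑ m ∈ Finset.Icc 1 k, (-1 : ℚ) ^ ((2 : ℤ) - (m : ℤ))
        * (∑ j ∈ Finset.Icc 1 k, (1 : ℚ) / (j : ℚ)) * (k.choose m : ℚ)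
      + ∑ l ∈ Finset.Icc 1 k, ∑ m ∈ Finset.Icc 1 k,
          (-1 : ℚ) ^ ((2 : ℤ) - (l : ℤ) - (m : ℤ))
            * (k.choose l : ℚ) * (k.choose m : ℚ)
            * ((l : ℚ) + (m : ℚ)) / ((l : ℚ) * (m : ℚ)) = 0 := by
  set a : ℕ → ℚ := fun m ↦ (-1) ^ m * k.choose m
  have single : ∀ m ∈ Icc 1 k, (-1 : ℚ) ^ ((2 : ℤ) - (m : ℤ))
      * (∑ j ∈ Icc 1 k, (1 : ℚ) / j) * k.choose m = harmonic k * a m := by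
    intro m _
    rw [neg_one_zpow_two_sub, harmonic_eq_sum_Icc]
    simp only [a, one_div]
    ring
  have double : ∀ l ∈ Icc 1 k, ∀ m ∈ Icc 1 k, (-1 : ℚ) ^ ((2 : ℤ) - l - m)
      * k.choose l * k.choose m * ((l : ℚ) + m) / (l * m) = a l / l * a m + a l * (a m / m) := by
    intro l hl m hm
    have hl0 : (l : ℚ) ≠ 0 := Nat.cast_ne_zero.mpr (Nat.one_le_iff_ne_zero.mp (mem_Icc.mp hl).1)
    have hm0 : (m : ℚ) ≠ 0 := Nat.cast_ne_zero.mpr (Nat.one_le_iff_ne_zero.mp (mem_Icc.mp hm).1)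
    rw [sub_sub, ← Nat.cast_add, neg_one_zpow_two_sub, pow_add]
    field_simp
    ring
  have alternating_harmonic : ∑ m ∈ Icc 1 k, a m / m = -harmonic k :=
    sum_Icc_one_neg_one_pow_mul_choose_div k
  rw [sum_congr rfl single, sum_congr rfl fun l hl ↦ sum_congr rfl (double l hl)]
  simp only [sum_add_distrib, ← sum_mul, ← mul_sum, alternating_harmonic]
  ring

theorem stmt4 (k : ℕ) (hk : 1 ≤ k) :
    2 * ∑ m ∈ Finset.Icc 1 k, (-1 : ℚ) ^ ((2 : ℤ) - (m : ℤ))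
        * (∑ j ∈ Finset.Icc 1 k, (1 : ℚ) / (j : ℚ)) * (k.choose m : ℚ)
      + ∑ l ∈ Finset.Icc 1 k, ∑ m ∈ Finset.Icc 1 k,
          (-1 : ℚ) ^ ((2 : ℤ) - (l : ℤ) - (m : ℤ))
            * (k.choose l : ℚ) * (k.choose m : ℚ)
            * ((l : ℚ) + (m : ℚ)) / ((l : ℚ) * (m : ℚ)) = 0 :=
  stmt4_general k
end

section
/- For integers k ≥ 1 and q with 3 ≤ q ≤ k, the q-th order coefficient of the equal-truncation generalized Hessian operator vanishes: 2 ∑_{m=1}^k (-1)^{2-m} (∑_{j=1}^k 1/j) C(k,m) m^{q-1} + ∑_{l=1}^k ∑_{m=1}^k (-1)^{2-l-m} C(k,l) C(k,m) (l+m)^q/(l·m) = 0. -/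
/-! `∑ₘ (-1)^m C(n,m) m^p` is, up to sign, the `n`-th forward difference of `x ↦ x^p` at `0`, so it
vanishes for `p < n`; with `p = q - 1` this kills the single sum. In the double sum the sign splits
as `(-1)^l (-1)^m`, and the binomial expansion of `(l + m)^q` factors it as
`∑ⱼ C(q,j) Sⱼ S_{q-j}` with `Sⱼ = ∑ₗ (-1)^l C(k,l) l^(j-1)`. As `q ≥ 3`, one of `j`, `q - j` is at
least `2`, and `Sⱼ = 0` for `2 ≤ j ≤ k`. -/

open Finset

theorem neg_one_pow_mul_neg_one_pow_sub {R : Type*} [Monoid R] [HasDistribNeg R] {m n : ℕ}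
    (h : m ≤ n) : (-1 : R) ^ n * (-1) ^ (n - m) = (-1) ^ m := by
  obtain ⟨d, rfl⟩ := Nat.exists_eq_add_of_le h
  rw [Nat.add_sub_cancel_left, pow_add, mul_assoc, ← pow_add, ← two_mul, pow_mul]
  simp

theorem neg_one_zpow_sub_natCast {K : Type*} [DivisionRing K] (z : ℤ) (n : ℕ) :
    (-1 : K) ^ (z - n) = (-1) ^ z * (-1) ^ n := by
  rw [zpow_sub₀ (by simp), zpow_natCast, div_eq_mul_inv, ← inv_pow, inv_neg_one]

theorem sum_range_neg_one_pow_mul_choose_mul_pow_eq_zero {R : Type*} [CommRing R] {n p : ℕ}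
    (h : p < n) : ∑ m ∈ range (n + 1), (-1 : R) ^ m * n.choose m * (m : R) ^ p = 0 := by
  have hdiff := congrFun (fwdDiff_iter_pow_eq_zero_of_lt (R := R) h) 0
  rw [fwdDiff_iter_eq_sum_shift, Pi.zero_apply] at hdiff
  rw [← mul_zero ((-1 : R) ^ n), ← hdiff, mul_sum]
  refine sum_congr rfl fun m hm => ?_
  rw [← neg_one_pow_mul_neg_one_pow_sub (Nat.lt_succ_iff.mp (mem_range.mp hm))]
  simp [mul_assoc]

theorem sum_Icc_neg_one_pow_mul_choose_mul_pow_eq_zero {R : Type*} [CommRing R] {n p : ℕ}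
    (hp : p ≠ 0) (h : p < n) : ∑ m ∈ Icc 1 n, (-1 : R) ^ m * n.choose m * (m : R) ^ p = 0 := by
  rw [← sum_range_neg_one_pow_mul_choose_mul_pow_eq_zero (R := R) h, range_eq_Ico,
    sum_eq_sum_Ico_succ_bot n.succ_pos]
  simp [zero_pow hp, Ico_add_one_right_eq_Icc]

theorem sum_Icc_neg_one_pow_mul_choose_div_mul_pow_eq_zero {K : Type*} [Field K] [CharZero K]
    {n j : ℕ} (hj : 2 ≤ j) (hjn : j ≤ n) :
    ∑ l ∈ Icc 1 n, (-1 : K) ^ l * n.choose l / l * (l : K) ^ j = 0 := by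
  obtain ⟨i, rfl⟩ : ∃ i, j = i + 1 := ⟨j - 1, by omega⟩
  rw [← sum_Icc_neg_one_pow_mul_choose_mul_pow_eq_zero (R := K) (n := n) (p := i)
    (by omega) (by omega)]
  refine sum_congr rfl fun l hl => ?_
  have hl : (l : K) ≠ 0 := Nat.cast_ne_zero.mpr (by have := (mem_Icc.mp hl).1; omega)
  field_simp
  ring

theorem sum_sum_mul_mul_add_pow {R ι κ : Type*} [CommSemiring R] (s : Finset ι) (t : Finset κ)
    (f x : ι → R) (g y : κ → R) (q : ℕ) :
    ∑ l ∈ s, ∑ m ∈ t, f l * g m * (x l + y m) ^ q =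
      ∑ j ∈ range (q + 1), q.choose j * (∑ l ∈ s, f l * x l ^ j) * ∑ m ∈ t, g m * y m ^ (q - j) := by
  calc ∑ l ∈ s, ∑ m ∈ t, f l * g m * (x l + y m) ^ q
      = ∑ l ∈ s, ∑ m ∈ t, ∑ j ∈ range (q + 1),
          q.choose j * (f l * x l ^ j) * (g m * y m ^ (q - j)) := by
        simp_rw [add_pow, mul_sum]
        exact sum_congr rfl fun l _ => sum_congr rfl fun m _ => sum_congr rfl fun j _ => by ring
    _ = ∑ j ∈ range (q + 1), ∑ l ∈ s, ∑ m ∈ t,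
          q.choose j * (f l * x l ^ j) * (g m * y m ^ (q - j)) := by
        simp_rw [sum_comm (s := t) (t := range (q + 1))]
        exact sum_comm
    _ = _ := sum_congr rfl fun j _ => by rw [mul_sum s, sum_mul_sum]

theorem sum_sum_neg_one_pow_mul_choose_div_mul_add_pow_eq_zero {K : Type*} [Field K] [CharZero K]
    {n q : ℕ} (hq : 3 ≤ q) (hqn : q ≤ n) :
    ∑ l ∈ Icc 1 n, ∑ m ∈ Icc 1 n,
      (-1 : K) ^ l * n.choose l / l * ((-1) ^ m * n.choose m / m) * ((l : K) + m) ^ q = 0 := by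
  rw [sum_sum_mul_mul_add_pow]
  refine sum_eq_zero fun j hj => ?_
  have hjq := Nat.lt_succ_iff.mp (mem_range.mp hj)
  rcases le_or_gt 2 j with hj2 | hj2
  · rw [sum_Icc_neg_one_pow_mul_choose_div_mul_pow_eq_zero hj2 (by omega), mul_zero, zero_mul]
  · rw [sum_Icc_neg_one_pow_mul_choose_div_mul_pow_eq_zero (j := q - j) (by omega) (by omega),
      mul_zero]

theorem stmt6 (k q : ℕ) (hq : 3 ≤ q) (hqk : q ≤ k) :
    2 * ∑ m ∈ Finset.Icc 1 k, (-1 : ℚ) ^ ((2 : ℤ) - (m : ℤ))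
        * (∑ j ∈ Finset.Icc 1 k, (1 : ℚ) / (j : ℚ)) * (k.choose m : ℚ) * (m : ℚ) ^ (q - 1)
      + ∑ l ∈ Finset.Icc 1 k, ∑ m ∈ Finset.Icc 1 k,
          (-1 : ℚ) ^ ((2 : ℤ) - (l : ℤ) - (m : ℤ))
            * (k.choose l : ℚ) * (k.choose m : ℚ)
            * ((l : ℚ) + (m : ℚ)) ^ q / ((l : ℚ) * (m : ℚ)) = 0 := by
  set H := ∑ j ∈ Icc 1 k, (1 : ℚ) / j
  have hsingle : ∑ m ∈ Icc 1 k, (-1 : ℚ) ^ ((2 : ℤ) - m) * H * k.choose m * (m : ℚ) ^ (q - 1) =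
      H * ∑ m ∈ Icc 1 k, (-1 : ℚ) ^ m * k.choose m * (m : ℚ) ^ (q - 1) := by
    rw [mul_sum]
    refine sum_congr rfl fun m _ => ?_
    rw [neg_one_zpow_sub_natCast]
    norm_num
    ring
  have hdouble : ∑ l ∈ Icc 1 k, ∑ m ∈ Icc 1 k, (-1 : ℚ) ^ ((2 : ℤ) - l - m)
        * k.choose l * k.choose m * ((l : ℚ) + m) ^ q / (l * m) =
      ∑ l ∈ Icc 1 k, ∑ m ∈ Icc 1 k,
        (-1 : ℚ) ^ l * k.choose l / l * ((-1) ^ m * k.choose m / m) * ((l : ℚ) + m) ^ q := by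
    refine sum_congr rfl fun l _ => sum_congr rfl fun m _ => ?_
    rw [neg_one_zpow_sub_natCast, neg_one_zpow_sub_natCast]
    norm_num
    ring
  rw [hsingle, hdouble, sum_Icc_neg_one_pow_mul_choose_mul_pow_eq_zero (by omega) (by omega),
    sum_sum_neg_one_pow_mul_choose_div_mul_add_pow_eq_zero hq hqk]
  ring
end

section
/- For every integer k ≥ 2, the second-order Taylor coefficient of the unequal-truncation Hessian operator D^k ∘ D^1 equals 1: (1/2)[−∑_{j=1}^k 1/j + ∑_{l=1}^k (-1)^{1-l} (C(k,l)/l)(l+1)^2 − ∑_{l=1}^k (-1)^{1-l} (C(k,l)/l) l^2] = 1. -/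
/-!
Since `(l + 1)² - l² = 2l + 1`, the two binomial sums combine to
`2 ∑ (-1)^(l+1) C(k,l) + ∑ (-1)^(l+1) C(k,l) / l`. The first sum is `1` (the alternating row sum
of Pascal's triangle, without its `l = 0` term), and the second is the classical identity
`∑ (-1)^(l+1) C(k,l) / l = H_k`, proved by induction on `k` via Pascal's rule and
`C(k, l-1) / l = C(k+1, l) / (k+1)`. The harmonic numbers cancel, leaving `(1/2) · 2 = 1`.
-/

open Finset

lemma neg_one_zpow_one_sub {R : Type*} [DivisionRing R] (l : ℕ) :
    (-1 : R) ^ ((1 : ℤ) - l) = (-1) ^ (l + 1) := by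
  rw [zpow_sub₀ (by norm_num), zpow_one, zpow_natCast, pow_succ, div_eq_mul_inv, ← inv_pow,
    inv_neg, inv_one]
  exact (Commute.neg_one_left _).eq

lemma sum_Icc_neg_one_pow_succ_mul_choose {R : Type*} [CommRing R] {k : ℕ} (hk : k ≠ 0) :
    ∑ l ∈ Icc 1 k, (-1 : R) ^ (l + 1) * k.choose l = 1 := by
  have h := congrArg (Int.cast : ℤ → R) (Int.alternating_sum_range_choose_of_ne hk)
  push_cast at h
  rw [range_eq_Ico, sum_eq_sum_Ico_succ_bot (by omega : 0 < k + 1), zero_add,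
    Ico_add_one_right_eq_Icc] at h
  simp only [pow_zero, Nat.choose_zero_right, Nat.cast_one, mul_one] at h
  simp only [pow_succ, mul_neg_one, neg_mul, sum_neg_distrib]
  linear_combination -h

lemma cast_choose_succ_div {K : Type*} [Field K] [CharZero K] (k : ℕ) {l : ℕ} (hl : l ≠ 0) :
    ((k + 1).choose l : K) / l = (k.choose l : K) / l + ((k + 1).choose l : K) / (k + 1) := by
  obtain ⟨m, rfl⟩ : ∃ m, l = m + 1 := ⟨l - 1, by omega⟩
  have absorb : (k.choose m : K) / (m + 1 : ℕ) = (k + 1).choose (m + 1) / (k + 1) := by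
    rw [div_eq_div_iff (Nat.cast_ne_zero.mpr m.succ_ne_zero) (Nat.cast_add_one_ne_zero k)]
    exact_mod_cast (mul_comm _ _).trans (Nat.add_one_mul_choose_eq k m)
  rw [← absorb, Nat.choose_succ_succ, Nat.cast_add, add_div, add_comm]

lemma sum_Icc_neg_one_pow_succ_mul_choose_div {K : Type*} [Field K] [CharZero K] (k : ℕ) :
    ∑ l ∈ Icc 1 k, (-1 : K) ^ (l + 1) * k.choose l / l = ∑ j ∈ Icc 1 k, (1 : K) / j := by
  induction k with
  | zero => simp
  | succ k ih =>
    have pascal : ∀ l ∈ Icc 1 (k + 1), (-1 : K) ^ (l + 1) * (k + 1).choose l / l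
        = (-1 : K) ^ (l + 1) * k.choose l / l
          + (-1 : K) ^ (l + 1) * (k + 1).choose l / (k + 1) := by
      intro l hl
      simp only [mul_div_assoc, ← mul_add]
      rw [cast_choose_succ_div k (Nat.one_le_iff_ne_zero.mp (mem_Icc.mp hl).1)]
    rw [sum_congr rfl pascal, sum_add_distrib, ← sum_div,
      sum_Icc_neg_one_pow_succ_mul_choose k.succ_ne_zero, sum_Icc_succ_top (by omega),
      sum_Icc_succ_top (by omega), Nat.choose_succ_self, ih]
    push_cast
    ring

theorem stmt9 (k : ℕ) (hk : 2 ≤ k) :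
    (1 / 2 : ℚ) *
      (-(∑ j ∈ Finset.Icc 1 k, (1 : ℚ) / (j : ℚ))
        + ∑ l ∈ Finset.Icc 1 k, (-1 : ℚ) ^ ((1 : ℤ) - (l : ℤ))
            * ((k.choose l : ℚ) / (l : ℚ)) * ((l : ℚ) + 1) ^ 2
        - ∑ l ∈ Finset.Icc 1 k, (-1 : ℚ) ^ ((1 : ℤ) - (l : ℤ))
            * ((k.choose l : ℚ) / (l : ℚ)) * (l : ℚ) ^ 2) = 1 := by
  have term : ∀ l ∈ Icc 1 k,
      (-1 : ℚ) ^ ((1 : ℤ) - l) * (k.choose l / l) * ((l + 1) ^ 2)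
        - (-1 : ℚ) ^ ((1 : ℤ) - l) * (k.choose l / l) * l ^ 2
      = 2 * ((-1 : ℚ) ^ (l + 1) * k.choose l) + (-1 : ℚ) ^ (l + 1) * k.choose l / l := by
    intro l hl
    have hl0 : (l : ℚ) ≠ 0 := Nat.cast_ne_zero.mpr (Nat.one_le_iff_ne_zero.mp (mem_Icc.mp hl).1)
    rw [neg_one_zpow_one_sub]
    field_simp
    ring
  rw [add_sub_assoc, ← sum_sub_distrib, sum_congr rfl term, sum_add_distrib, ← mul_sum,
    sum_Icc_neg_one_pow_succ_mul_choose (by omega), sum_Icc_neg_one_pow_succ_mul_choose_div]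
  ring
end
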